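/- arXiv:1412.1110 — 6 statements merged into one kernel-verified Lean document; each statement's English description precedes it below -/
import Mathlib

section
/- For all integers m, n, r ≥ 0, the r-Bell numbers satisfy B^{(r)}(m+n) = Σ_{i=0}^{n} Σ_{j=0}^{m} (j+r)^{n-i} · C(n,i) · S^{(r)}(m,j) · B(i), where C(n,i) is the binomial coefficient. -/
/-!
Write `T_r a n = ∑ᵢ r^(n-i) (n choose i) aᵢ` for the binomial transform, so that
`S^{(r)}(·, k) = T_r S(·, k)` and `B^{(r)} = T_r B`. Pascal's rule gives
`T_r a (n+1) = r T_r a n + T_r (a ∘ succ) n`, hence `T_s ∘ T_t = T_{s+t}`; together with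
`B(n+1) = T_1 B n` this yields `B^{(r)}(n+1) = r B^{(r)}(n) + B^{(r+1)}(n)`. Combined with the
`r`-Stirling recurrence `S^{(r)}(m+1, k+1) = S^{(r)}(m, k) + (k+1+r) S^{(r)}(m, k+1)`, it shows
that `∑ⱼ S^{(r)}(m, j) B^{(j+r)}(n)` depends only on `m + n`; at `m = 0` it is `B^{(r)}(n)`.
Expanding `B^{(j+r)}(n) = T_{j+r} B n` gives the formula.
-/

open Finset

/-- Stirling numbers of the second kind. -/
def stirling2 : ℕ → ℕ → ℕ
  | 0, 0 => 1
  | 0, _ + 1 => 0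
  | _ + 1, 0 => 0
  | n + 1, k + 1 => stirling2 n k + (k + 1) * stirling2 n (k + 1)

/-- Bell numbers. -/
def bell (n : ℕ) : ℕ := ∑ k ∈ range (n + 1), stirling2 n k

/-- r-Stirling numbers of the second kind. -/
def rStirling2 (r n k : ℕ) : ℕ :=
  ∑ i ∈ range (n + 1), r ^ (n - i) * n.choose i * stirling2 i k

/-- r-Bell numbers. -/
def rBell (r n : ℕ) : ℕ := ∑ k ∈ range (n + 1), rStirling2 r n k

theorem stirling2_eq_stirlingSecond : ∀ n k, stirling2 n k = Nat.stirlingSecond n k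
  | 0, 0 | 0, _ + 1 | _ + 1, 0 => rfl
  | n + 1, k + 1 => by
    rw [stirling2, Nat.stirlingSecond_succ_succ, stirling2_eq_stirlingSecond n k,
      stirling2_eq_stirlingSecond n (k + 1), add_comm]

theorem stirling2_eq_zero_of_lt {n k : ℕ} (h : n < k) : stirling2 n k = 0 := by
  rw [stirling2_eq_stirlingSecond, Nat.stirlingSecond_eq_zero_of_lt h]

section BinomialTransform

variable {R : Type*} [CommSemiring R]

def binomialTransform (r : R) (a : ℕ → R) (n : ℕ) : R :=
  ∑ i ∈ range (n + 1), r ^ (n - i) * n.choose i * a i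

theorem binomialTransform_add (r : R) (a b : ℕ → R) (n : ℕ) :
    binomialTransform r (a + b) n = binomialTransform r a n + binomialTransform r b n := by
  simp only [binomialTransform, Pi.add_apply, mul_add, sum_add_distrib]

theorem binomialTransform_const_mul (r c : R) (a : ℕ → R) (n : ℕ) :
    binomialTransform r (fun i => c * a i) n = c * binomialTransform r a n := by
  simp only [binomialTransform, mul_sum]
  exact sum_congr rfl fun _ _ => by ring

theorem binomialTransform_succ (r : R) (a : ℕ → R) (n : ℕ) :
    binomialTransform r a (n + 1) =
      r * binomialTransform r a n + binomialTransform r (fun i => a (i + 1)) n := by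
  refine (sum_congr rfl fun i _ => by ring).trans
    ((sum_choose_succ_mul (fun i j => r ^ j * a i) n).trans ?_)
  simp only [binomialTransform, mul_sum]
  congr 1 <;> refine sum_congr rfl fun i hi => ?_
  · rw [Nat.sub_add_comm (mem_range_succ_iff.mp hi), pow_succ]; ring
  · ring

theorem binomialTransform_binomialTransform (s t : R) (a : ℕ → R) (n : ℕ) :
    binomialTransform s (binomialTransform t a) n = binomialTransform (s + t) a n := by
  induction n generalizing a with
  | zero => simp [binomialTransform]
  | succ n ih =>
    have shift : (fun i => binomialTransform t a (i + 1)) =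
        (fun i => t * binomialTransform t a i) + binomialTransform t (fun i => a (i + 1)) := by
      ext i; exact binomialTransform_succ t a i
    rw [binomialTransform_succ, shift, binomialTransform_add, binomialTransform_const_mul, ih, ih,
      binomialTransform_succ]
    ring

theorem binomialTransform_sum {ι : Type*} (r : R) (s : Finset ι) (a : ι → ℕ → R) (n : ℕ) :
    binomialTransform r (fun i => ∑ k ∈ s, a k i) n = ∑ k ∈ s, binomialTransform r (a k) n := by
  simp only [binomialTransform, mul_sum]
  exact sum_comm

theorem binomialTransform_congr (r : R) {a b : ℕ → R} {n : ℕ} (h : ∀ i ≤ n, a i = b i) :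
    binomialTransform r a n = binomialTransform r b n :=
  sum_congr rfl fun i hi => by rw [h i (mem_range_succ_iff.mp hi)]

end BinomialTransform

theorem sum_stirling2_eq_bell {n N : ℕ} (h : n ≤ N) :
    ∑ k ∈ range (N + 1), stirling2 n k = bell n := by
  refine (sum_subset (range_subset_range.mpr (by omega)) fun k hk hkn => ?_).symm
  exact stirling2_eq_zero_of_lt (by simp only [mem_range] at hk hkn; omega)

theorem sum_binomialTransform_stirling2 (r n : ℕ) :
    ∑ k ∈ range (n + 1), binomialTransform r (fun i => stirling2 i k) n =
      binomialTransform r bell n := by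
  rw [← binomialTransform_sum]
  exact binomialTransform_congr r fun i hi => sum_stirling2_eq_bell hi

theorem rStirling2_eq_binomialTransform (r m k : ℕ) :
    rStirling2 r m k = binomialTransform r (fun i => stirling2 i k) m :=
  rfl

theorem rBell_eq_binomialTransform (r n : ℕ) : rBell r n = binomialTransform r bell n :=
  sum_binomialTransform_stirling2 r n

theorem binomialTransform_stirling2_succ_succ (r n k : ℕ) :
    binomialTransform r (fun i => stirling2 (i + 1) (k + 1)) n =
      binomialTransform r (fun i => stirling2 i k) n +
        (k + 1) * binomialTransform r (fun i => stirling2 i (k + 1)) n := by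
  rw [← binomialTransform_const_mul, ← binomialTransform_add]
  rfl

theorem binomialTransform_stirling2_succ_zero (r n : ℕ) :
    binomialTransform r (fun i => stirling2 (i + 1) 0) n = 0 :=
  sum_eq_zero fun _ _ => mul_eq_zero_of_right _ rfl

theorem stirling2_succ_succ_eq_binomialTransform (n k : ℕ) :
    stirling2 (n + 1) (k + 1) = binomialTransform 1 (fun i => stirling2 i k) n := by
  induction n generalizing k with
  | zero => simp [binomialTransform, stirling2]
  | succ n ih =>
    rw [binomialTransform_succ, one_mul, ← ih]
    cases k with
    | zero => rw [binomialTransform_stirling2_succ_zero, stirling2]; simp [stirling2]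
    | succ k => rw [binomialTransform_stirling2_succ_succ, ← ih, ← ih, stirling2]; ring

theorem bell_succ (n : ℕ) : bell (n + 1) = binomialTransform 1 bell n := by
  rw [bell, sum_range_succ', stirling2, add_zero, ← sum_binomialTransform_stirling2]
  exact sum_congr rfl fun k _ => stirling2_succ_succ_eq_binomialTransform n k

theorem rBell_succ (r n : ℕ) : rBell r (n + 1) = r * rBell r n + rBell (r + 1) n := by
  have bell_comp_succ : (fun i => bell (i + 1)) = binomialTransform 1 bell := funext bell_succ
  rw [rBell_eq_binomialTransform, rBell_eq_binomialTransform, rBell_eq_binomialTransform,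
    binomialTransform_succ, bell_comp_succ, binomialTransform_binomialTransform]

theorem rStirling2_eq_zero_of_lt {r m k : ℕ} (h : m < k) : rStirling2 r m k = 0 :=
  sum_eq_zero fun i hi => by
    rw [stirling2_eq_zero_of_lt (by simp only [mem_range] at hi; omega), mul_zero]

theorem rStirling2_succ_zero (r m : ℕ) : rStirling2 r (m + 1) 0 = r * rStirling2 r m 0 := by
  rw [rStirling2_eq_binomialTransform, rStirling2_eq_binomialTransform, binomialTransform_succ,
    binomialTransform_stirling2_succ_zero, add_zero]

theorem rStirling2_succ_succ (r m k : ℕ) :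
    rStirling2 r (m + 1) (k + 1) = rStirling2 r m k + (k + 1 + r) * rStirling2 r m (k + 1) := by
  simp only [rStirling2_eq_binomialTransform]
  rw [binomialTransform_succ, binomialTransform_stirling2_succ_succ]
  ring

theorem sum_rStirling2_succ_mul (r m : ℕ) (g : ℕ → ℕ) :
    ∑ j ∈ range (m + 2), rStirling2 r (m + 1) j * g j =
      ∑ j ∈ range (m + 1), rStirling2 r m j * ((j + r) * g j + g (j + 1)) := by
  have extend : ∑ j ∈ range (m + 1), rStirling2 r m j * ((j + r) * g j) =
      ∑ j ∈ range (m + 2), rStirling2 r m j * ((j + r) * g j) := by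
    rw [sum_range_succ _ (m + 1), rStirling2_eq_zero_of_lt (lt_add_one m), zero_mul, add_zero]
  simp only [mul_add, sum_add_distrib]
  rw [extend, sum_range_succ', sum_range_succ' _ (m + 1)]
  simp only [rStirling2_succ_succ, rStirling2_succ_zero, add_mul, mul_add, sum_add_distrib]
  ring_nf

theorem rBell_add_eq_sum_rStirling2_mul (r m n : ℕ) :
    rBell r (m + n) = ∑ j ∈ range (m + 1), rStirling2 r m j * rBell (j + r) n := by
  induction m generalizing n with
  | zero => simp [rStirling2, stirling2]
  | succ m ih =>
    rw [add_right_comm, add_assoc, ih, sum_rStirling2_succ_mul]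
    refine sum_congr rfl fun j _ => ?_
    rw [rBell_succ, add_right_comm]

theorem rBell_add (m n r : ℕ) :
    rBell r (m + n) =
      ∑ i ∈ range (n + 1), ∑ j ∈ range (m + 1),
        (j + r) ^ (n - i) * n.choose i * rStirling2 r m j * bell i := by
  rw [rBell_add_eq_sum_rStirling2_mul, sum_comm]
  refine sum_congr rfl fun j _ => ?_
  rw [rBell_eq_binomialTransform, binomialTransform, mul_sum]
  exact sum_congr rfl fun i _ => by rw [Nat.cast_id]; ring
end

section
/- For all integers m, n, k ≥ 1: C(m+n-k-1, k-1) = Σ_{i=0}^{n} Σ_{j=0}^{m} α_{i,j} · (-1)^{(i+1)j} · C(n,i) · C(m-⌊j/2⌋-1, m-j) · C(i-k+⌈j/2⌉-1, i-2k+j), where α_{i,j} = χ(j is odd) + χ(j is even and i = n). -/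
/-!
Swap the two sums. For even `j` only the term `i = n` survives. For odd `j = 2t + 1` the sum over
`i` is an alternating binomial transform: after the shift `i = 2(k - t) - 1 + s` it is a
Chu–Vandermonde convolution with the negative upper index `-(k - t)`, because
`(-1)^s C(v + s, s) = C(-v - 1, s)`, and it evaluates to its own `C`-factor at `i = n`.

What is left is `S(n, k) = Σ_j C(m - ⌊j/2⌋ - 1, m - j) C(n - k + ⌈j/2⌉ - 1, n - 2k + j)`. It counts
the tilings of a strip of length `m + n - 2` by `k - 1` dominoes and some squares, split by whether
a domino covers cells `m - 1` and `m` (`j` even) or not (`j` odd), so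
`S(n, k) = C(m + n - k - 1, m + n - 2k)`. Formally: both sides satisfy
`S(n + 2, k) = S(n + 1, k) + S(n, k - 1)` by Pascal's rule, and for `n ≤ 1` the sum has a single
term. Symmetry of `C` turns the lower index `m + n - 2k` into `k - 1`.
-/

open Finset

/-- Binomial coefficient with integer arguments: C(a,0) = 1 for every integer a, and
C(a,b) = 0 whenever b < 0 or 0 ≤ b ≤ a fails (for b > 0). -/
def C (a b : ℤ) : ℤ :=
  if b = 0 then 1 else if 0 ≤ b ∧ b ≤ a then (a.toNat.choose b.toNat : ℤ) else 0

lemma C_zero_right (a : ℤ) : C a 0 = 1 := if_pos rfl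

lemma C_eq_zero {a b : ℤ} (h : b < 0 ∨ 0 < b ∧ a < b) : C a b = 0 := by
  unfold C
  rw [if_neg (by omega), if_neg (by omega)]

lemma C_natCast (p q : ℕ) : C p q = p.choose q := by
  unfold C
  split_ifs with h0 h
  · simp [show q = 0 by omega]
  · simp
  · rw [Nat.choose_eq_zero_of_lt (by omega), Nat.cast_zero]

lemma C_symm {a : ℤ} (ha : 0 ≤ a) (b : ℤ) : C a b = C a (a - b) := by
  lift a to ℕ using ha
  rcases lt_or_ge b 0 with hb | hb
  · rw [C_eq_zero (by omega), C_eq_zero (by omega)]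
  rcases le_or_gt b a with hba | hba
  · lift b to ℕ using hb
    rw [← Nat.cast_sub (by omega), C_natCast, C_natCast, Nat.choose_symm (by omega)]
  · rw [C_eq_zero (by omega), C_eq_zero (by omega)]

-- The exception is `C a 1 = 0` for `a ≤ 0`, against the convention `C (a - 1) 0 = 1`.
lemma C_eq_C_sub_one_add {a b : ℤ} (h : 0 < a ∨ b ≠ 1) :
    C a b = C (a - 1) (b - 1) + C (a - 1) b := by
  rcases lt_trichotomy b 0 with hb | rfl | hb
  · rw [C_eq_zero (by omega), C_eq_zero (by omega), C_eq_zero (by omega), add_zero]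
  · rw [C_zero_right, C_zero_right, C_eq_zero (by omega), zero_add]
  rcases le_or_gt a 0 with ha | ha
  · rw [C_eq_zero (by omega), C_eq_zero (by omega), C_eq_zero (by omega), add_zero]
  obtain ⟨p, rfl⟩ : ∃ p : ℕ, a = p + 1 := ⟨(a - 1).toNat, by omega⟩
  obtain ⟨q, rfl⟩ : ∃ q : ℕ, b = q + 1 := ⟨(b - 1).toNat, by omega⟩
  rw [add_sub_cancel_right, add_sub_cancel_right, ← Nat.cast_add_one, ← Nat.cast_add_one,
    C_natCast, C_natCast, C_natCast, Nat.choose_succ_succ, Nat.cast_add]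

theorem sum_neg_one_pow_mul_choose_mul_choose (a N T : ℕ) (h : a < N) :
    ∑ s ∈ range (T + 1), (-1) ^ s * ((a + s).choose s : ℤ) * (N.choose (T - s) : ℤ) =
      ((N - a - 1).choose T : ℤ) := by
  have hvdm := Ring.add_choose_eq T (Commute.all (-(a + 1 : ℤ)) N)
  rw [show -(a + 1 : ℤ) + N = ((N - a - 1 : ℕ) : ℤ) by omega, Ring.choose_natCast,
    Finset.Nat.sum_antidiagonal_eq_sum_range_succ
      (fun s t => Ring.choose (-(a + 1 : ℤ)) s * Ring.choose (N : ℤ) t)] at hvdm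
  rw [hvdm]
  refine sum_congr rfl fun s _ => ?_
  rw [Ring.choose_neg, Ring.choose_natCast,
    show (a + 1 : ℤ) + s - 1 = ((a + s : ℕ) : ℤ) by push_cast; ring, Ring.choose_natCast,
    Units.smul_def, Int.coe_negOnePow_natCast, smul_eq_mul]

theorem sum_neg_one_pow_mul_choose_mul_C (n : ℕ) (u : ℤ) :
    ∑ i ∈ range (n + 1), (-1) ^ (i + 1) * (n.choose i : ℤ) * C (i - u) (i - 2 * u + 1) =
      C (n - u) (n - 2 * u + 1) := by
  by_cases hu : 1 ≤ u ∧ 2 * u - 1 ≤ n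
  swap
  · rw [C_eq_zero (by omega)]
    refine sum_eq_zero fun i hi => ?_
    rw [mem_range] at hi
    rw [C_eq_zero (by omega), mul_zero]
  obtain ⟨v, rfl⟩ : ∃ v : ℕ, u = v + 1 := ⟨(u - 1).toNat, by omega⟩
  obtain ⟨T, rfl⟩ : ∃ T : ℕ, n = 2 * v + 1 + T := ⟨n - (2 * v + 1), by omega⟩
  have hterm : ∀ s ∈ range (T + 1),
      (-1) ^ (2 * v + 1 + s + 1) * ((2 * v + 1 + T).choose (2 * v + 1 + s) : ℤ) *
          C ((2 * v + 1 + s : ℕ) - (v + 1 : ℤ)) ((2 * v + 1 + s : ℕ) - 2 * (v + 1 : ℤ) + 1) =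
        (-1) ^ s * ((v + s).choose s : ℤ) * ((2 * v + 1 + T).choose (T - s) : ℤ) := by
    intro s hs
    rw [mem_range] at hs
    rw [show 2 * v + 1 + s + 1 = 2 * (v + 1) + s by ring, pow_add, pow_mul, neg_one_sq, one_pow,
      one_mul, Nat.choose_symm_of_eq_add (by omega : 2 * v + 1 + T = 2 * v + 1 + s + (T - s)),
      show C ((2 * v + 1 + s : ℕ) - (v + 1 : ℤ)) ((2 * v + 1 + s : ℕ) - 2 * (v + 1 : ℤ) + 1) =
        C (v + s : ℕ) s by congr 1 <;> push_cast <;> ring, C_natCast]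
    ring
  have hlow : ∀ i ∈ range (2 * v + 1),
      (-1) ^ (i + 1) * ((2 * v + 1 + T).choose i : ℤ) *
        C (i - (v + 1 : ℤ)) (i - 2 * (v + 1 : ℤ) + 1) = 0 := by
    intro i hi
    rw [mem_range] at hi
    rw [C_eq_zero (by omega), mul_zero]
  rw [show 2 * v + 1 + T + 1 = 2 * v + 1 + (T + 1) by ring, sum_range_add, sum_eq_zero hlow,
    zero_add, sum_congr rfl hterm, sum_neg_one_pow_mul_choose_mul_choose v _ T (by omega),
    show ((2 * v + 1 + T : ℕ) : ℤ) - (v + 1 : ℤ) = (v + T : ℕ) by push_cast; ring,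
    show ((2 * v + 1 + T : ℕ) : ℤ) - 2 * (v + 1 : ℤ) + 1 = T by push_cast; ring, C_natCast]
  congr 2
  omega

def dominoSum (m n : ℕ) (k : ℤ) : ℤ :=
  ∑ j ∈ range (m + 1),
    C ((m : ℤ) - (j : ℤ) / 2 - 1) ((m : ℤ) - j) *
      C ((n : ℤ) - k + ((j : ℤ) + 1) / 2 - 1) ((n : ℤ) - 2 * k + j)

lemma dominoSum_of_le_one (m : ℕ) {n : ℕ} (hn : n ≤ 1) (k : ℤ) :
    dominoSum m n k = C (m + n - k - 1) (m + n - 2 * k) := by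
  have hsecond : ∀ j : ℕ, C ((n : ℤ) - k + ((j : ℤ) + 1) / 2 - 1) ((n : ℤ) - 2 * k + j) =
      if (j : ℤ) = 2 * k - n then 1 else 0 := by
    intro j
    split_ifs with hj
    · rw [show (n : ℤ) - 2 * k + j = 0 by omega, C_zero_right]
    · exact C_eq_zero (by omega)
  simp only [dominoSum, hsecond, mul_ite, mul_one, mul_zero]
  by_cases hc : 0 ≤ 2 * k - n ∧ 2 * k - n ≤ m
  · obtain ⟨c, hc'⟩ : ∃ c : ℕ, (c : ℤ) = 2 * k - n := ⟨(2 * k - n).toNat, by omega⟩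
    rw [sum_eq_single_of_mem c (mem_range.2 (by omega)) fun j _ hj => if_neg (by omega),
      if_pos hc']
    congr 1 <;> omega
  · rw [C_eq_zero (by omega)]
    exact sum_eq_zero fun j hj => if_neg (by rw [mem_range] at hj; omega)

lemma dominoSum_add_two (m n : ℕ) (k : ℤ) :
    dominoSum m (n + 2) k = dominoSum m (n + 1) k + dominoSum m n (k - 1) := by
  unfold dominoSum
  rw [← sum_add_distrib]
  refine sum_congr rfl fun j _ => ?_
  rw [← mul_add]
  congr 1
  rw [C_eq_C_sub_one_add]
  · congr 1 <;> congr 1 <;> push_cast <;> ring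
  · push_cast
    omega

theorem dominoSum_eq (m n : ℕ) (k : ℤ) :
    dominoSum m n k = C (m + n - k - 1) (m + n - 2 * k) := by
  induction n using Nat.twoStepInduction generalizing k with
  | zero => exact dominoSum_of_le_one m (by omega) k
  | one => exact dominoSum_of_le_one m le_rfl k
  | more n ih₀ ih₁ =>
    rw [dominoSum_add_two, ih₀, ih₁,
      C_eq_C_sub_one_add (a := (m : ℤ) + (n + 2 : ℕ) - k - 1) (by push_cast; omega)]
    congr 1 <;> congr 1 <;> push_cast <;> ring

lemma sum_parity_weight_mul_choose_mul_C (n j : ℕ) (k : ℤ) :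
    ∑ i ∈ range (n + 1),
        ((if Odd j then 1 else 0) + (if Even j ∧ i = n then 1 else 0) : ℤ) *
          (-1) ^ ((i + 1) * j) * (n.choose i : ℤ) *
          C ((i : ℤ) - k + ((j : ℤ) + 1) / 2 - 1) ((i : ℤ) - 2 * k + j) =
      C ((n : ℤ) - k + ((j : ℤ) + 1) / 2 - 1) ((n : ℤ) - 2 * k + j) := by
  obtain ⟨t, rfl | rfl⟩ := Nat.even_or_odd' j
  · have hodd : ¬Odd (2 * t) := Nat.not_odd_iff_even.2 (even_two_mul t)
    rw [sum_eq_single_of_mem n (self_mem_range_succ n) fun i _ hi => by simp [hodd, hi]]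
    simp [hodd, mul_left_comm _ 2, pow_mul]
  · have hodd : Odd (2 * t + 1) := odd_two_mul_add_one t
    have hnot : ¬Even (2 * t + 1) := Nat.not_even_iff_odd.2 hodd
    have hterm : ∀ i ∈ range (n + 1),
        ((if Odd (2 * t + 1) then 1 else 0) + (if Even (2 * t + 1) ∧ i = n then 1 else 0) : ℤ) *
            (-1) ^ ((i + 1) * (2 * t + 1)) * (n.choose i : ℤ) *
            C ((i : ℤ) - k + (((2 * t + 1 : ℕ) : ℤ) + 1) / 2 - 1)
              ((i : ℤ) - 2 * k + (2 * t + 1 : ℕ)) =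
          (-1) ^ (i + 1) * (n.choose i : ℤ) * C (i - (k - t)) (i - 2 * (k - t) + 1) := by
      intro i _
      rw [if_pos hodd, if_neg fun h => hnot h.1, add_zero, one_mul,
        show (i + 1) * (2 * t + 1) = i + 1 + 2 * ((i + 1) * t) by ring, pow_add, pow_mul,
        neg_one_sq, one_pow, mul_one]
      congr 1
      congr 1 <;> push_cast <;> omega
    rw [sum_congr rfl hterm, sum_neg_one_pow_mul_choose_mul_C]
    congr 1 <;> push_cast <;> omega

theorem binom_identity_1_general (m n k : ℕ) (hm : 1 ≤ m) (hn : 1 ≤ n) :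
    C ((m : ℤ) + n - k - 1) ((k : ℤ) - 1) =
      ∑ i ∈ range (n + 1), ∑ j ∈ range (m + 1),
        ((if Odd j then 1 else 0) + (if Even j ∧ i = n then 1 else 0) : ℤ) *
          (-1) ^ ((i + 1) * j) * (n.choose i : ℤ) *
          C ((m : ℤ) - (j : ℤ) / 2 - 1) ((m : ℤ) - j) *
          C ((i : ℤ) - k + ((j : ℤ) + 1) / 2 - 1) ((i : ℤ) - 2 * k + j) := by
  have hsymm :
      C ((m : ℤ) + n - k - 1) ((k : ℤ) - 1) = C ((m : ℤ) + n - k - 1) (m + n - 2 * k) := by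
    rcases le_or_gt (k : ℤ) (m + n - 1) with hk | hk
    · rw [C_symm (by omega)]
      congr 1
      ring
    · rw [C_eq_zero (by omega), C_eq_zero (by omega)]
  rw [hsymm, ← dominoSum_eq, dominoSum, sum_comm]
  refine sum_congr rfl fun j _ => ?_
  rw [← sum_parity_weight_mul_choose_mul_C n j k, mul_sum]
  refine sum_congr rfl fun i _ => ?_
  ring

theorem binom_identity_1 (m n k : ℕ) (hm : 1 ≤ m) (hn : 1 ≤ n) (hk : 1 ≤ k) :
    C ((m : ℤ) + n - k - 1) ((k : ℤ) - 1) =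
      ∑ i ∈ range (n + 1), ∑ j ∈ range (m + 1),
        ((if Odd j then 1 else 0) + (if Even j ∧ i = n then 1 else 0) : ℤ) *
          (-1) ^ ((i + 1) * j) * (n.choose i : ℤ) *
          C ((m : ℤ) - (j : ℤ) / 2 - 1) ((m : ℤ) - j) *
          C ((i : ℤ) - k + ((j : ℤ) + 1) / 2 - 1) ((i : ℤ) - 2 * k + j) :=
  binom_identity_1_general m n k hm hn
end

section
/- For all integers m, n, k ≥ 1: C(m+n-k, k-1) = Σ_{i=0}^{n} Σ_{j=0}^{m} α_{i,j} · (-1)^{ij} · C(n,i) · C(m-⌊j/2⌋-1, m-j) · C(i-k+⌊j/2⌋, i-2k+j+1), where α_{i,j} = χ(j is odd) + χ(j is even and i = n). -/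
/-!
Swap the two sums. For even `j = 2t` only `i = n` contributes, while for odd `j = 2t + 1` the
sum over `i` is an alternating binomial sum, computed by induction on `n` with Pascal's rule, with
value `C(n - k + t + 1, k - 1 - t)`. One more use of Pascal's rule turns the right-hand side into
`F(m, n - k, k - 1) + F(m - 1, n - k, k - 2)`, where `F(M, N, a) = Σ_t C(M - t, t) C(N + t, a - t)`
convolves the coefficients of the Fibonacci polynomials with binomial coefficients. These
coefficients obey the Fibonacci recursion, so
`F(M + 2, N, a) = F(M + 1, N, a) + F(M, N + 1, a - 1)`, and a two-step induction on `M` finishes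
the proof.
-/

open Finset

-- Unlike `C`, this vanishes whenever the upper argument is negative, which makes Pascal's rule
-- hold everywhere except at `(0, 0)`.
def binom (a c : ℤ) : ℤ := if 0 ≤ a ∧ 0 ≤ c then (a.toNat.choose c.toNat : ℤ) else 0

section binom

variable {a c : ℤ}

@[simp] lemma binom_natCast (a c : ℕ) : binom a c = a.choose c := by simp [binom]

lemma binom_of_neg_left (h : a < 0) : binom a c = 0 := by
  simp [binom, not_le.2 h]

lemma binom_of_neg_right (h : c < 0) : binom a c = 0 := by
  simp [binom, not_le.2 h]

lemma binom_of_lt (h : a < c) : binom a c = 0 := by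
  unfold binom
  split_ifs
  · rw [Nat.choose_eq_zero_of_lt (by omega), Nat.cast_zero]
  · rfl

lemma binom_zero_right (h : 0 ≤ a) : binom a 0 = 1 := by simp [binom, h]

lemma binom_pascal (h : a ≠ 0 ∨ c ≠ 0) :
    binom a c = binom (a - 1) c + binom (a - 1) (c - 1) := by
  rcases lt_or_ge c 0 with hc | hc
  · simp [binom_of_neg_right, hc, (by omega : c - 1 < 0)]
  rcases lt_or_ge a 1 with ha | ha
  · rw [binom_of_neg_left (by omega : a - 1 < 0), binom_of_neg_left (by omega : a - 1 < 0),
      add_zero]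
    rcases lt_or_eq_of_le (show a ≤ 0 by omega) with ha | rfl
    · exact binom_of_neg_left ha
    · exact binom_of_lt (by omega)
  rcases eq_or_lt_of_le hc with rfl | hc
  · rw [binom_zero_right (by omega), binom_zero_right (by omega),
      binom_of_neg_right (by norm_num), add_zero]
  unfold binom
  rw [if_pos (by omega), if_pos (by omega), if_pos (by omega),
    show a.toNat = (a - 1).toNat + 1 by omega, show c.toNat = (c - 1).toNat + 1 by omega,
    Nat.choose_succ_succ', Nat.cast_add, add_comm]

lemma binom_symm : binom a (a - c) = binom a c := by
  rcases lt_or_ge a 0 with ha | ha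
  · simp [binom_of_neg_left ha]
  rcases lt_or_ge c 0 with hc | hc
  · rw [binom_of_lt (by omega), binom_of_neg_right hc]
  rcases lt_or_ge a c with hac | hac
  · rw [binom_of_neg_right (by omega), binom_of_lt hac]
  lift a to ℕ using ha
  lift c to ℕ using hc
  rw [← Nat.cast_sub (by omega), binom_natCast, binom_natCast, Nat.choose_symm (by omega)]

lemma C_eq_binom (h : c ≠ 0 ∨ 0 ≤ a) : C a c = binom a c := by
  unfold C binom
  split_ifs <;>
    first | omega | simp [Nat.choose_eq_zero_of_lt (by omega : a.toNat < c.toNat)] | simp_all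

end binom

def altChooseSum (n : ℕ) (g : ℕ → ℤ) : ℤ := ∑ i ∈ range (n + 1), (-1) ^ i * n.choose i * g i

lemma altChooseSum_zero (g : ℕ → ℤ) : altChooseSum 0 g = g 0 := by simp [altChooseSum]

lemma altChooseSum_succ (n : ℕ) (g : ℕ → ℤ) :
    altChooseSum (n + 1) g = altChooseSum n g - altChooseSum n (fun i ↦ g (i + 1)) := by
  have hsplit : ∀ i, (-1) ^ (i + 1) * ((n + 1).choose (i + 1) : ℤ) * g (i + 1) =
      (-1) ^ (i + 1) * (n.choose (i + 1) : ℤ) * g (i + 1) - (-1) ^ i * n.choose i * g (i + 1) := by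
    intro i
    rw [Nat.choose_succ_succ', Nat.cast_add, pow_succ]
    ring
  have hshift : altChooseSum n g =
      ∑ i ∈ range (n + 1), (-1) ^ (i + 1) * (n.choose (i + 1) : ℤ) * g (i + 1) + g 0 := by
    rw [altChooseSum, ← add_zero (∑ i ∈ range (n + 1), _),
      ← mul_zero ((-1) ^ (n + 1) * g (n + 1)), ← Nat.cast_zero, ← Nat.choose_succ_self n,
      mul_right_comm, ← sum_range_succ (fun i ↦ (-1) ^ i * (n.choose i : ℤ) * g i), sum_range_succ']
    simp
  rw [altChooseSum, sum_range_succ', hshift]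
  simp only [hsplit, sum_sub_distrib, altChooseSum, pow_zero, Nat.choose_zero_right, Nat.cast_one,
    mul_one, one_mul]
  ring

lemma altChooseSum_binom_add_natCast (n s : ℕ) (r : ℤ) :
    altChooseSum n (fun i ↦ binom (i + s) r) = (-1) ^ n * binom s (r - n) := by
  induction n generalizing s with
  | zero => simp [altChooseSum_zero]
  | succ n ih =>
    have hs : ∀ i : ℕ, ((i + 1 : ℕ) : ℤ) + s = i + (s + 1 : ℕ) := by intro i; push_cast; ring
    rw [altChooseSum_succ, ih, funext fun i ↦ congrArg (binom · r) (hs i), ih,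
      binom_pascal (a := ((s + 1 : ℕ) : ℤ)) (c := r - n) (by left; omega)]
    push_cast
    ring_nf

lemma altChooseSum_binom_sub_natCast (n q r : ℕ) :
    altChooseSum n (fun i ↦ binom (i - (q + 1)) r) = (-1) ^ (r + q + 1) * binom (n - 1 - r) q := by
  induction n generalizing q with
  | zero =>
    rw [altChooseSum_zero, binom_of_neg_left (by push_cast; omega),
      binom_of_neg_left (by push_cast; omega), mul_zero]
  | succ n ih =>
    rw [altChooseSum_succ, ih]
    rcases q with _ | q
    · have hs : ∀ i : ℕ, ((i + 1 : ℕ) : ℤ) - ((0 : ℕ) + 1) = i + (0 : ℕ) := by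
        intro i; push_cast; ring
      rw [funext fun i ↦ congrArg (binom · r) (hs i), altChooseSum_binom_add_natCast,
        show ((n + 1 : ℕ) : ℤ) - 1 - r = n - r by push_cast; ring, Nat.cast_zero]
      rcases lt_trichotomy n r with h | rfl | h
      · rw [binom_of_neg_left (a := n - 1 - r) (by omega),
          binom_of_neg_left (a := n - r) (by omega), binom_of_lt (by omega)]
        ring
      · rw [binom_of_neg_left (by omega), sub_self, binom_zero_right le_rfl]
        ring
      · rw [binom_zero_right (by omega), binom_zero_right (by omega),
          binom_of_neg_right (by omega)]
        ring
    · have hs : ∀ i : ℕ, ((i + 1 : ℕ) : ℤ) - ((q + 1 : ℕ) + 1) = i - ((q : ℤ) + 1) := by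
        intro i; push_cast; ring
      rw [funext fun i ↦ congrArg (binom · r) (hs i), ih,
        show ((n + 1 : ℕ) : ℤ) - 1 - r = n - r by push_cast; ring,
        binom_pascal (a := (n : ℤ) - r) (by right; omega), show (n : ℤ) - r - 1 = n - 1 - r by ring,
        show ((q + 1 : ℕ) : ℤ) - 1 = q by push_cast; ring]
      ring

lemma altChooseSum_C (n : ℕ) (e : ℤ) :
    altChooseSum n (fun i ↦ C (i + e) (i + 2 * e + 2)) = binom (n + e + 1) (-e - 1) := by
  rcases lt_trichotomy e (-1) with he | rfl | he
  · obtain ⟨q, rfl⟩ : ∃ q : ℕ, e = -(q + 2) := ⟨(-e - 2).toNat, by omega⟩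
    have hterm : ∀ i : ℕ, C (i + -((q : ℤ) + 2)) (i + 2 * -((q : ℤ) + 2) + 2) =
        binom (i - ((q + 1 : ℕ) + 1)) q := by
      intro i
      rw [C_eq_binom (by omega), ← binom_symm]
      push_cast
      ring_nf
    simp_rw [hterm, altChooseSum_binom_sub_natCast]
    rw [show q + (q + 1) + 1 = 2 * (q + 1) by ring, pow_mul, neg_one_sq, one_pow, one_mul]
    congr 1 <;> push_cast <;> ring
  · -- only `C (-1) 0 = 1` survives
    have hterm : ∀ i : ℕ, C (i + -1) (i + 2 * -1 + 2) = if i = 0 then 1 else 0 := by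
      intro i
      unfold C
      split_ifs <;> first | rfl | omega
    simp_rw [hterm]
    simp [altChooseSum, binom_zero_right (Nat.cast_nonneg n)]
  · have hterm : ∀ i : ℕ, C (i + e) (i + 2 * e + 2) = 0 := fun i ↦ by
      rw [C_eq_binom (by omega), binom_of_lt (by omega)]
    simp_rw [hterm]
    simp [altChooseSum, binom_of_neg_right (by omega : -e - 1 < 0)]

def fibConv (M : ℕ) (N a : ℤ) : ℤ := ∑ t ∈ range (M + 1), binom (M - t) t * binom (N + t) (a - t)

section fibConv

variable (N a : ℤ)

lemma fibConv_zero : fibConv 0 N a = binom N a := by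
  simp [fibConv, binom_zero_right]

lemma fibConv_one : fibConv 1 N a = binom N a := by
  simp [fibConv, sum_range_succ, binom_of_lt, binom_zero_right zero_le_one]

lemma fibConv_add_two (M : ℕ) :
    fibConv (M + 2) N a = fibConv (M + 1) N a + fibConv M (N + 1) (a - 1) := by
  have hpascal : ∀ t : ℕ, binom ((M + 2 : ℕ) - t) t =
      binom ((M + 1 : ℕ) - t) t + binom ((M + 1 : ℕ) - t) (t - 1) := fun t ↦ by
    rw [binom_pascal (by omega)]
    push_cast
    ring_nf
  simp only [fibConv, hpascal, add_mul, sum_add_distrib]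
  congr 1
  · rw [sum_range_succ (n := M + 2), binom_of_neg_left (a := (M + 1 : ℕ) - (M + 2 : ℕ))
      (by push_cast; omega), zero_mul, add_zero]
  · rw [sum_range_succ', sum_range_succ, binom_of_neg_left (a := (M + 1 : ℕ) - (M + 1 + 1 : ℕ))
      (by push_cast; omega), binom_of_neg_right (c := ((0 : ℕ) : ℤ) - 1) (by norm_num)]
    simp only [zero_mul, add_zero]
    refine sum_congr rfl fun t _ ↦ ?_
    push_cast
    ring_nf

lemma fibConv_succ_add_fibConv (M : ℕ) (h : 0 ≤ N + a) :
    fibConv (M + 1) N a + fibConv M N (a - 1) = binom (M + 1 + N) a := by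
  induction M using Nat.twoStepInduction generalizing N a with
  | zero =>
    rw [fibConv_one, fibConv_zero, Nat.cast_zero, zero_add, binom_pascal (a := 1 + N) (by omega)]
    ring_nf
  | one =>
    rw [fibConv_add_two, fibConv_one, fibConv_zero, fibConv_one, Nat.cast_one,
      binom_pascal (a := 1 + 1 + N) (by omega),
      binom_pascal (a := 1 + 1 + N - 1) (c := a) (by omega)]
    ring_nf
  | more M ih₀ ih₁ =>
    have e₁ := ih₁ N a h
    have e₀ := ih₀ (N + 1) (a - 1) (by omega)
    rw [show M + 2 + 1 = M + 1 + 2 from rfl, fibConv_add_two N a (M + 1),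
      fibConv_add_two N (a - 1) M, binom_pascal (a := ((M + 2 : ℕ) : ℤ) + 1 + N) (by omega)]
    push_cast at e₀ e₁ ⊢
    ring_nf at e₀ e₁ ⊢
    linear_combination e₁ + e₀

end fibConv

lemma sum_range_binom_pair_eq_binom (M : ℕ) {N a : ℤ} (h : 0 ≤ N + a) :
    ∑ t ∈ range (M + 2), (binom (M - t) (t - 1) * binom (N + t) (a - t) +
      binom (M - t) t * binom (N + t + 1) (a - t)) = binom (M + 1 + N) a := by
  have hterm : ∀ t ∈ range (M + 2),
      binom (M - t) (t - 1) * binom (N + t) (a - t) + binom (M - t) t * binom (N + t + 1) (a - t) =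
        binom ((M + 1 : ℕ) - t) t * binom (N + t) (a - t) +
          binom (M - t) t * binom (N + t) (a - 1 - t) := fun t _ ↦ by
    rw [binom_pascal (a := N + t + 1) (by omega),
      binom_pascal (a := ((M + 1 : ℕ) : ℤ) - t) (by omega)]
    push_cast
    ring_nf
  rw [sum_congr rfl hterm, sum_add_distrib,
    sum_range_succ (fun t : ℕ ↦ binom ((M : ℤ) - t) t * binom (N + t) (a - 1 - t)) (M + 1),
    binom_of_neg_left (a := (M : ℤ) - (M + 1 : ℕ)) (by push_cast; omega), zero_mul, add_zero,
    ← fibConv_succ_add_fibConv N a M h]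
  rfl

lemma sum_range_two_mul {β : Type*} [AddCommMonoid β] (f : ℕ → β) (n : ℕ) :
    ∑ j ∈ range (2 * n), f j = ∑ t ∈ range n, (f (2 * t) + f (2 * t + 1)) := by
  induction n with
  | zero => simp
  | succ n ih => rw [mul_add_one, sum_range_succ, sum_range_succ, sum_range_succ, ih, add_assoc]

def rhsTerm (m n k i j : ℕ) : ℤ :=
  ((if Odd j then 1 else 0) + (if Even j ∧ i = n then 1 else 0) : ℤ) *
    (-1) ^ (i * j) * (n.choose i : ℤ) *
    C ((m : ℤ) - (j : ℤ) / 2 - 1) ((m : ℤ) - j) *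
    C ((i : ℤ) - k + (j : ℤ) / 2) ((i : ℤ) - 2 * k + j + 1)

lemma rhsTerm_eq_zero_of_lt (m n k i j : ℕ) (hj : m < j) : rhsTerm m n k i j = 0 := by
  rw [rhsTerm, C_eq_binom (c := (m : ℤ) - j) (by omega), binom_of_neg_right (by omega)]
  ring

lemma sum_rhsTerm_even (m n k t : ℕ) (hm : 1 ≤ m) :
    ∑ i ∈ range (n + 1), rhsTerm m n k i (2 * t) =
      binom (m - 1 - t) (t - 1) * binom (n - k + t) (k - 1 - t) := by
  have hhalf : ((2 * t : ℕ) : ℤ) / 2 = t := by push_cast; omega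
  have hsign : (-1 : ℤ) ^ (n * (2 * t)) = 1 := Even.neg_one_pow ⟨n * t, by ring⟩
  simp only [rhsTerm, Nat.not_odd_iff_even.2 (even_two_mul t), even_two_mul, true_and, if_false,
    zero_add, ite_mul, one_mul, zero_mul, sum_ite_eq', mem_range, lt_add_one, if_true, hhalf,
    Nat.choose_self, Nat.cast_one, mul_one, hsign]
  rw [C_eq_binom (by omega), C_eq_binom (by omega), ← binom_symm, ← binom_symm (a := n - k + t)]
  push_cast
  ring_nf

lemma sum_rhsTerm_odd (m n k t : ℕ) :
    ∑ i ∈ range (n + 1), rhsTerm m n k i (2 * t + 1) =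
      binom (m - 1 - t) t * binom (n - k + t + 1) (k - 1 - t) := by
  have hhalf : ((2 * t + 1 : ℕ) : ℤ) / 2 = t := by push_cast; omega
  have hterm : ∀ i ∈ range (n + 1), rhsTerm m n k i (2 * t + 1) =
      C (m - t - 1) (m - (2 * t + 1 : ℕ)) *
        ((-1) ^ i * n.choose i * C (i + ((t : ℤ) - k)) (i + 2 * ((t : ℤ) - k) + 2)) := fun i _ ↦ by
    simp only [rhsTerm, odd_two_mul_add_one, Nat.not_even_iff_odd.2 (odd_two_mul_add_one t),
      if_true, false_and, if_false, add_zero, one_mul, hhalf, mul_comm i, pow_mul,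
      Odd.neg_one_pow (odd_two_mul_add_one t)]
    push_cast
    ring_nf
  rw [sum_congr rfl hterm, ← mul_sum]
  change _ * altChooseSum n (fun i ↦ C (i + ((t : ℤ) - k)) (i + 2 * ((t : ℤ) - k) + 2)) = _
  rw [altChooseSum_C, C_eq_binom (by omega), ← binom_symm]
  push_cast
  ring_nf

theorem binom_identity_2_general (m n k : ℕ) (hm : 1 ≤ m) (hn : 1 ≤ n) :
    C ((m : ℤ) + n - k) ((k : ℤ) - 1) =
      ∑ i ∈ range (n + 1), ∑ j ∈ range (m + 1),
        ((if Odd j then 1 else 0) + (if Even j ∧ i = n then 1 else 0) : ℤ) *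
          (-1) ^ (i * j) * (n.choose i : ℤ) *
          C ((m : ℤ) - (j : ℤ) / 2 - 1) ((m : ℤ) - j) *
          C ((i : ℤ) - k + (j : ℤ) / 2) ((i : ℤ) - 2 * k + j + 1) := by
  obtain ⟨M, rfl⟩ := Nat.exists_eq_add_of_le' hm
  change _ = ∑ i ∈ range (n + 1), ∑ j ∈ range (M + 1 + 1), rhsTerm (M + 1) n k i j
  rw [sum_comm, sum_subset (range_subset_range.2 (by omega : M + 1 + 1 ≤ 2 * (M + 2)))
      fun j _ hj ↦ sum_eq_zero fun i _ ↦ rhsTerm_eq_zero_of_lt _ _ _ i j (by simpa using hj),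
    sum_range_two_mul]
  simp only [sum_rhsTerm_even _ _ _ _ hm, sum_rhsTerm_odd]
  push_cast
  simp only [add_sub_cancel_right]
  rw [sum_range_binom_pair_eq_binom M (N := n - k) (a := k - 1) (by omega), C_eq_binom (by omega)]
  ring_nf

theorem binom_identity_2 (m n k : ℕ) (hm : 1 ≤ m) (hn : 1 ≤ n) (hk : 1 ≤ k) :
    C ((m : ℤ) + n - k) ((k : ℤ) - 1) =
      ∑ i ∈ range (n + 1), ∑ j ∈ range (m + 1),
        ((if Odd j then 1 else 0) + (if Even j ∧ i = n then 1 else 0) : ℤ) *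
          (-1) ^ (i * j) * (n.choose i : ℤ) *
          C ((m : ℤ) - (j : ℤ) / 2 - 1) ((m : ℤ) - j) *
          C ((i : ℤ) - k + (j : ℤ) / 2) ((i : ℤ) - 2 * k + j + 1) :=
  binom_identity_2_general m n k hm hn
end

section
/- For all integers n ≥ k ≥ 1: Σ_{i=k}^{n} (-1)^{i} · C(n,i) · C(i-⌊k/2⌋-1, i-k) = (-1)^{k} · C(n-⌈k/2⌉, ⌊k/2⌋). -/
/-!
Write `k = ⌊k/2⌋ + r + 1`, so that `r + 1 = ⌈k/2⌉`, and put `i = k + j`. The summand becomes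
`(-1)^k · C(n, k+j) · (-1)^j C(r+j, j)`, and by upper negation `(-1)^j C(r+j, j) = C(-(r+1), j)`.
The sum is therefore the Chu–Vandermonde convolution of `C(n, ·)` and `C(-(r+1), ·)` at `n - k`,
namely `C(n - (r+1), n - k)`, which by symmetry is `C(n - ⌈k/2⌉, ⌊k/2⌋)`.
-/

open Finset

lemma C_natCast_s8 (a b : ℕ) : C a b = a.choose b := by
  rcases eq_or_ne b 0 with rfl | hb
  · simp [C]
  rcases le_or_gt b a with hba | hab
  · simp [C, hb, hba]
  · simp [C, hb, hab.not_ge, Nat.choose_eq_zero_of_lt hab]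

lemma Int.ringChoose_neg_natCast_add_one (r j : ℕ) :
    Ring.choose (-((r : ℤ) + 1)) j = (-1) ^ j * (r + j).choose j := by
  rw [Ring.choose_neg, Units.smul_def, Int.coe_negOnePow_natCast, smul_eq_mul,
    show (r : ℤ) + 1 + j - 1 = ((r + j : ℕ) : ℤ) by push_cast; ring, Ring.choose_natCast]

theorem sum_neg_one_pow_mul_choose_add_mul_choose (n k r : ℕ) (hkn : k ≤ n) (hrn : r < n) :
    ∑ j ∈ range (n - k + 1), (-1 : ℤ) ^ j * n.choose (k + j) * (r + j).choose j =
      (n - (r + 1)).choose (n - k) := by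
  have vandermonde := Ring.add_choose_eq (n - k) (Commute.all (n : ℤ) (-((r : ℤ) + 1)))
  rw [show (n : ℤ) + -((r : ℤ) + 1) = ((n - (r + 1) : ℕ) : ℤ) by omega, Ring.choose_natCast,
    ← Nat.sum_antidiagonal_swap, Nat.sum_antidiagonal_eq_sum_range_succ_mk] at vandermonde
  simp only [Prod.swap_prod_mk, Nat.succ_eq_add_one] at vandermonde
  rw [vandermonde]
  refine sum_congr rfl fun j hj => ?_
  rw [mem_range] at hj
  rw [Ring.choose_natCast, Int.ringChoose_neg_natCast_add_one,
    Nat.choose_symm_of_eq_add (show n = (n - k - j) + (k + j) by omega)]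
  ring

theorem alternating_binom_sum (n k : ℕ) (hk : 1 ≤ k) (hkn : k ≤ n) :
    ∑ i ∈ Icc k n, (-1 : ℤ) ^ i * (n.choose i : ℤ) *
        C ((i : ℤ) - (k : ℤ) / 2 - 1) ((i : ℤ) - k) =
      (-1) ^ k * C ((n : ℤ) - ((k : ℤ) + 1) / 2) ((k : ℤ) / 2) := by
  obtain ⟨m, r, hk_eq, hfloor⟩ : ∃ m r : ℕ, k = m + r + 1 ∧ (k : ℤ) / 2 = m :=
    ⟨k / 2, k - k / 2 - 1, by omega, by omega⟩
  have hceil : ((k : ℤ) + 1) / 2 = r + 1 := by omega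
  have hterm : ∀ j ∈ range (n + 1 - k), (-1 : ℤ) ^ (k + j) * (n.choose (k + j) : ℤ) *
      C (((k + j : ℕ) : ℤ) - (k : ℤ) / 2 - 1) (((k + j : ℕ) : ℤ) - k) =
      (-1) ^ k * ((-1) ^ j * n.choose (k + j) * (r + j).choose j) := by
    intro j _
    rw [hfloor, show ((k + j : ℕ) : ℤ) - m - 1 = ((r + j : ℕ) : ℤ) by omega,
      show ((k + j : ℕ) : ℤ) - k = (j : ℤ) by omega, C_natCast_s8, pow_add]
    ring
  rw [← Ico_add_one_right_eq_Icc, sum_Ico_eq_sum_range, sum_congr rfl hterm, ← mul_sum,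
    Nat.succ_sub hkn, sum_neg_one_pow_mul_choose_add_mul_choose n k r hkn (by omega), hfloor,
    hceil, show (n : ℤ) - (r + 1) = ((n - (r + 1) : ℕ) : ℤ) by omega, C_natCast_s8,
    Nat.choose_symm_of_eq_add (show n - (r + 1) = (n - k) + m by omega)]
end

section
/- For all integers m, n, k ≥ 0, in the field ℚ(q) of rational functions: qbinom(m+n,k)·qbinom(m+n+1,n) − qbinom(m,k)·qbinom(k+m+n+1,n) = Σ_{i=1}^{n} Σ_{j=1}^{k} q^{i(j+m+1) − 2j(k-j+1)} · qbinom(m,j-1) · qbinom(k+1,j) · qbinom(i-1,k-j) · qbinom(m+n+j-i,n-i), where the exponent of q may be a negative integer. -/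
/-!
Write `[a, b]` for `qbinomF a b`. Summing over `i` first, each inner sum is an upper
q-Vandermonde convolution `∑_s q^(s(B+1)) [A+s, s] [B+N-s, N-s] = [A+B+N+1, N]`, and after the
shift `j ↦ j + 1` the right-hand side becomes `∑_{j<k} qWeight m k j · [m+n+j+1, m+k+1]`. The
missing term `j = k` is `[m, k] [k+m+n+1, n]`, so it remains to sum over all `j ≤ k`: expanding
`[m+n+1+j, m+k+1]` by q-Vandermonde and exchanging the sums, the sum over `j` collapses by
trinomial revision `[m, j] [j, c] = [m, c] [m-c, j-c]` followed by q-Vandermonde, and the two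
identities once more reduce what is left to `[m+n, k] [m+n+1, n]`.
-/

open Finset

/-- The q-binomial coefficient in the field ℚ(q) of rational functions. -/
noncomputable def qbinomF : ℕ → ℕ → RatFunc ℚ
  | _, 0 => 1
  | 0, _ + 1 => 0
  | n + 1, k + 1 => qbinomF n k + RatFunc.X ^ (k + 1) * qbinomF n (k + 1)

lemma sum_range_add_eq_of_forall_lt {M : Type*} [AddCommMonoid M] {f : ℕ → M} {c : ℕ}
    (hf : ∀ j < c, f j = 0) (N : ℕ) :
    ∑ j ∈ range (c + N), f j = ∑ u ∈ range N, f (c + u) := by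
  rw [sum_range_add, sum_eq_zero fun j hj => hf j (mem_range.1 hj), zero_add]

lemma sum_Icc_one_eq_sum_range {M : Type*} [AddCommMonoid M] (f : ℕ → M) (n : ℕ) :
    ∑ i ∈ Icc 1 n, f i = ∑ i ∈ range n, f (i + 1) := by
  rw [range_eq_Ico, sum_Ico_add' f 0 n 1, zero_add, ← Ico_add_one_right_eq_Icc]

section

local notation "q" => (RatFunc.X : RatFunc ℚ)

@[simp] lemma qbinomF_zero_right (n : ℕ) : qbinomF n 0 = 1 := by
  cases n <;> rfl

lemma qbinomF_succ_succ (n k : ℕ) :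
    qbinomF (n + 1) (k + 1) = qbinomF n k + q ^ (k + 1) * qbinomF n (k + 1) := rfl

lemma qbinomF_eq_zero_of_lt : ∀ {n k : ℕ}, n < k → qbinomF n k = 0
  | 0, _ + 1, _ => rfl
  | _ + 1, _ + 1, h => by
    rw [qbinomF_succ_succ, qbinomF_eq_zero_of_lt (by omega), qbinomF_eq_zero_of_lt (by omega),
      mul_zero, add_zero]

@[simp] lemma qbinomF_self : ∀ n : ℕ, qbinomF n n = 1
  | 0 => rfl
  | n + 1 => by
    rw [qbinomF_succ_succ, qbinomF_self n, qbinomF_eq_zero_of_lt n.lt_succ_self, mul_zero,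
      add_zero]

noncomputable def qNat (n : ℕ) : RatFunc ℚ := ∑ i ∈ range n, q ^ i

noncomputable def qFactorial : ℕ → RatFunc ℚ
  | 0 => 1
  | n + 1 => qFactorial n * qNat (n + 1)

lemma qNat_add (a b : ℕ) : qNat (a + b) = qNat a + q ^ a * qNat b := by
  simp only [qNat, sum_range_add, mul_sum, pow_add]

lemma qNat_ne_zero {n : ℕ} (hn : n ≠ 0) : qNat n ≠ 0 := by
  have h :
      qNat n = algebraMap (Polynomial ℚ) (RatFunc ℚ) (∑ i ∈ range n, Polynomial.X ^ i) := by
    simp [qNat, RatFunc.algebraMap_X]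
  rw [h, ne_eq, map_eq_zero_iff _ (RatFunc.algebraMap_injective ℚ)]
  intro h0
  simpa [hn] using congrArg (Polynomial.eval 1) h0

lemma qFactorial_ne_zero : ∀ n : ℕ, qFactorial n ≠ 0
  | 0 => one_ne_zero
  | n + 1 => mul_ne_zero (qFactorial_ne_zero n) (qNat_ne_zero n.succ_ne_zero)

lemma qbinomF_add_mul_qFactorial_mul (a b : ℕ) :
    qbinomF (a + b) a * qFactorial a * qFactorial b = qFactorial (a + b) := by
  induction a generalizing b with
  | zero => simp [qFactorial]
  | succ a iha =>
    induction b with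
    | zero => simp [qFactorial]
    | succ b ihb =>
      have h := iha (b + 1)
      rw [← add_assoc] at h
      rw [add_right_comm] at ihb
      rw [show a + 1 + (b + 1) = a + b + 1 + 1 by omega, qbinomF_succ_succ]
      simp only [qFactorial] at *
      rw [show a + b + 1 + 1 = (a + 1) + (b + 1) by omega, qNat_add (a + 1) (b + 1)]
      linear_combination qNat (a + 1) * h + q ^ (a + 1) * qNat (b + 1) * ihb

lemma qbinomF_symm_add (a b : ℕ) : qbinomF (a + b) a = qbinomF (a + b) b := by
  have h := qbinomF_add_mul_qFactorial_mul b a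
  rw [add_comm b a] at h
  refine mul_right_cancel₀ (mul_ne_zero (qFactorial_ne_zero a) (qFactorial_ne_zero b)) ?_
  linear_combination qbinomF_add_mul_qFactorial_mul a b - h

lemma qbinomF_symm {n k : ℕ} (hk : k ≤ n) : qbinomF n (n - k) = qbinomF n k := by
  obtain ⟨a, rfl⟩ := Nat.exists_eq_add_of_le hk
  rw [Nat.add_sub_cancel_left, qbinomF_symm_add]

lemma qbinomF_add_mul_qbinomF (a b c : ℕ) :
    qbinomF (a + b + c) (a + b) * qbinomF (a + b) a =
      qbinomF (a + b + c) a * qbinomF (b + c) b := by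
  refine mul_right_cancel₀ (mul_ne_zero (mul_ne_zero (qFactorial_ne_zero a)
    (qFactorial_ne_zero b)) (qFactorial_ne_zero c)) ?_
  have h₁ := qbinomF_add_mul_qFactorial_mul (a + b) c
  have h₂ := qbinomF_add_mul_qFactorial_mul a b
  have h₃ := qbinomF_add_mul_qFactorial_mul a (b + c)
  have h₄ := qbinomF_add_mul_qFactorial_mul b c
  rw [← add_assoc] at h₃
  linear_combination qbinomF (a + b + c) (a + b) * qFactorial c * h₂ + h₁
    - qbinomF (a + b + c) a * qFactorial a * h₄ - h₃

lemma qbinomF_mul_qbinomF {n k s : ℕ} (hsk : s ≤ k) :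
    qbinomF n k * qbinomF k s = qbinomF n s * qbinomF (n - s) (k - s) := by
  obtain ⟨b, rfl⟩ := Nat.exists_eq_add_of_le hsk
  rcases le_or_gt (s + b) n with hn | hn
  · obtain ⟨c, rfl⟩ := Nat.exists_eq_add_of_le hn
    rw [qbinomF_add_mul_qbinomF, add_assoc, Nat.add_sub_cancel_left, Nat.add_sub_cancel_left]
  · rw [qbinomF_eq_zero_of_lt hn, zero_mul]
    rcases le_or_gt s n with hs | hs
    · rw [qbinomF_eq_zero_of_lt (by omega : n - s < s + b - s), mul_zero]
    · rw [qbinomF_eq_zero_of_lt hs, zero_mul]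

-- The exponent lives in `ℤ`, so that it needs no case distinction on `u ≤ A`.
lemma qbinomF_add_eq_sum (A B N : ℕ) :
    qbinomF (A + B) N =
      ∑ u ∈ range (N + 1),
        q ^ (((A : ℤ) - u) * ((N : ℤ) - u)) * qbinomF A u * qbinomF B (N - u) := by
  induction A generalizing N with
  | zero =>
    rw [sum_range_succ', sum_eq_zero fun u _ => by rw [qbinomF_eq_zero_of_lt u.succ_pos]; ring]
    simp
  | succ A ih =>
    cases N with
    | zero => simp
    | succ N =>
      have hq : q ≠ 0 := RatFunc.X_ne_zero
      have hshift : ∀ v ∈ range (N + 1),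
          q ^ (((↑(A + 1) : ℤ) - ↑(v + 1)) * ((↑(N + 1) : ℤ) - ↑(v + 1)))
              * qbinomF (A + 1) (v + 1) * qbinomF B (N + 1 - (v + 1)) =
            q ^ (((A : ℤ) - v) * ((N : ℤ) - v)) * qbinomF A v * qbinomF B (N - v) +
              q ^ (N + 1) * (q ^ (((A : ℤ) - ↑(v + 1)) * ((↑(N + 1) : ℤ) - ↑(v + 1)))
                * qbinomF A (v + 1) * qbinomF B (N + 1 - (v + 1))) := by
        intro v _
        have e₁ : q ^ (((↑(A + 1) : ℤ) - ↑(v + 1)) * ((↑(N + 1) : ℤ) - ↑(v + 1))) =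
            q ^ (((A : ℤ) - v) * ((N : ℤ) - v)) := by
          push_cast; ring_nf
        have e₂ : q ^ (((A : ℤ) - v) * ((N : ℤ) - v)) * q ^ (v + 1) =
            q ^ (N + 1) * q ^ (((A : ℤ) - ↑(v + 1)) * ((↑(N + 1) : ℤ) - ↑(v + 1))) := by
          rw [← zpow_natCast, ← zpow_natCast, ← zpow_add₀ hq, ← zpow_add₀ hq]
          push_cast; ring_nf
        rw [e₁, qbinomF_succ_succ, Nat.add_sub_add_right]
        linear_combination qbinomF A (v + 1) * qbinomF B (N - v) * e₂
      have hu₀ : q ^ ((↑(A + 1) : ℤ) * ↑(N + 1)) =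
          q ^ (N + 1) * q ^ ((A : ℤ) * ↑(N + 1)) := by
        rw [← zpow_natCast, ← zpow_add₀ hq]
        push_cast; ring_nf
      rw [add_right_comm, qbinomF_succ_succ, ih N, ih (N + 1), sum_range_succ' _ (N + 1),
        sum_range_succ' _ (N + 1), sum_congr rfl hshift, sum_add_distrib, mul_add, mul_sum]
      simp only [Nat.cast_zero, sub_zero, qbinomF_zero_right, Nat.sub_zero, hu₀]
      ring

lemma qbinomF_add_add_one_eq_sum (A N : ℕ) :
    qbinomF (A + N + 1) N = ∑ s ∈ range (N + 1), q ^ s * qbinomF (A + s) s := by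
  induction N with
  | zero => simp
  | succ N ih =>
    rw [sum_range_succ, ← ih, ← add_assoc, qbinomF_succ_succ]

lemma qbinomF_add_add_add_one_eq_sum (A B N : ℕ) :
    qbinomF (A + B + N + 1) N =
      ∑ s ∈ range (N + 1),
        q ^ (s * (B + 1)) * qbinomF (A + s) s * qbinomF (B + N - s) (N - s) := by
  induction B generalizing N with
  | zero =>
    rw [add_zero, qbinomF_add_add_one_eq_sum]
    refine sum_congr rfl fun s _ => ?_
    simp only [zero_add, qbinomF_self, mul_one]
  | succ B ihB =>
    induction N with
    | zero => simp
    | succ N ihN =>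
      have hterm : ∀ s ∈ range (N + 1),
          q ^ (s * (B + 1 + 1)) * qbinomF (A + s) s * qbinomF (B + 1 + (N + 1) - s) (N + 1 - s) =
            q ^ (s * (B + 1 + 1)) * qbinomF (A + s) s * qbinomF (B + 1 + N - s) (N - s) +
              q ^ (N + 1) * (q ^ (s * (B + 1)) * qbinomF (A + s) s *
                qbinomF (B + (N + 1) - s) (N + 1 - s)) := by
        intro s hs
        obtain ⟨t, rfl⟩ := Nat.exists_eq_add_of_le (Nat.lt_succ_iff.1 (mem_range.1 hs))
        rw [show B + 1 + (s + t + 1) - s = B + t + 1 + 1 by omega,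
          show s + t + 1 - s = t + 1 by omega, show B + 1 + (s + t) - s = B + t + 1 by omega,
          show B + (s + t + 1) - s = B + t + 1 by omega, show s + t - s = t by omega,
          qbinomF_succ_succ]
        have e : q ^ (s * (B + 1 + 1)) * q ^ (t + 1) = q ^ (s + t + 1) * q ^ (s * (B + 1)) := by
          rw [← pow_add, ← pow_add]; ring_nf
        linear_combination qbinomF (A + s) s * qbinomF (B + t + 1) (t + 1) * e
      have hlast := ihB (N + 1)
      rw [sum_range_succ] at hlast
      rw [sum_range_succ, sum_congr rfl hterm, sum_add_distrib, ← mul_sum, ← ihN,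
        show A + (B + 1) + (N + 1) + 1 = A + B + (N + 1) + 1 + 1 by omega, qbinomF_succ_succ,
        hlast, show A + B + (N + 1) + 1 = A + (B + 1) + N + 1 by omega]
      simp only [Nat.sub_self, qbinomF_zero_right, show B + (N + 1) - (N + 1) = B by omega,
        show B + 1 + (N + 1) - (N + 1) = B + 1 by omega, mul_one]
      ring

lemma sum_Icc_pow_mul_qbinomF_mul_qbinomF (a d n : ℕ) :
    ∑ i ∈ Icc 1 n, q ^ (i * (a + 1)) * qbinomF (i - 1) d * qbinomF (a + n - i) (n - i) =
      q ^ ((d + 1) * (a + 1)) * qbinomF (a + n) (a + d + 1) := by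
  rw [sum_Icc_one_eq_sum_range]
  rcases lt_or_ge n (d + 1) with hn | hn
  · rw [qbinomF_eq_zero_of_lt (by omega), mul_zero]
    refine sum_eq_zero fun i hi => ?_
    rw [Nat.add_sub_cancel, qbinomF_eq_zero_of_lt (by simp at hi; omega), mul_zero, zero_mul]
  obtain ⟨N, rfl⟩ : ∃ N, n = d + (N + 1) := ⟨n - (d + 1), by omega⟩
  have hterm : ∀ s ∈ range (N + 1),
      q ^ ((d + s + 1) * (a + 1)) * qbinomF (d + s + 1 - 1) d *
          qbinomF (a + (d + (N + 1)) - (d + s + 1)) (d + (N + 1) - (d + s + 1)) =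
        q ^ ((d + 1) * (a + 1)) *
          (q ^ (s * (a + 1)) * qbinomF (d + s) s * qbinomF (a + N - s) (N - s)) := by
    intro s _
    rw [Nat.add_sub_cancel, qbinomF_symm_add,
      show a + (d + (N + 1)) - (d + s + 1) = a + N - s by omega,
      show d + (N + 1) - (d + s + 1) = N - s by omega]
    ring
  rw [sum_range_add_eq_of_forall_lt fun i hi => by
      rw [Nat.add_sub_cancel, qbinomF_eq_zero_of_lt hi, mul_zero, zero_mul],
    sum_congr rfl hterm, ← mul_sum, ← qbinomF_add_add_add_one_eq_sum,
    show a + (d + (N + 1)) = a + d + 1 + N by omega, qbinomF_symm_add,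
    show d + a + N + 1 = a + d + 1 + N by omega]

noncomputable def qWeight (m k j : ℕ) : RatFunc ℚ :=
  q ^ (((k : ℤ) - j) * ((m : ℤ) - j)) * qbinomF m j * qbinomF (k + 1) (j + 1)

lemma sum_qWeight_mul_qbinomF (m k c : ℕ) :
    ∑ j ∈ range (k + 1), qWeight m k j * qbinomF j c =
      qbinomF m c * qbinomF (m + k + 1 - c) (m + 1) := by
  rcases lt_or_ge k c with hkc | hck
  · rw [qbinomF_eq_zero_of_lt (by omega : m + k + 1 - c < m + 1), mul_zero]
    exact sum_eq_zero fun j hj => by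
      rw [qbinomF_eq_zero_of_lt (by simp at hj; omega : j < c), mul_zero]
  obtain ⟨b, rfl⟩ := Nat.exists_eq_add_of_le hck
  have hterm : ∀ u ∈ range (b + 1), qWeight m (c + b) (c + u) * qbinomF (c + u) c =
      qbinomF m c * (q ^ (((m : ℤ) - c - u) * ((b : ℤ) - u)) * qbinomF (m - c) u *
        qbinomF (c + b + 1) (b - u)) := by
    intro u hu
    have htri := qbinomF_mul_qbinomF (n := m) (Nat.le_add_right c u)
    rw [Nat.add_sub_cancel_left] at htri
    have hexp : ((↑(c + b) : ℤ) - ↑(c + u)) * ((m : ℤ) - ↑(c + u)) =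
        ((m : ℤ) - c - u) * ((b : ℤ) - u) := by
      push_cast; ring
    rw [qWeight, hexp, ← qbinomF_symm (by simp at hu; omega : c + u + 1 ≤ c + b + 1),
      show c + b + 1 - (c + u + 1) = b - u by omega]
    linear_combination
      q ^ (((m : ℤ) - c - u) * ((b : ℤ) - u)) * qbinomF (c + b + 1) (b - u) * htri
  rw [add_assoc c b 1,
    sum_range_add_eq_of_forall_lt fun j hj => by rw [qbinomF_eq_zero_of_lt hj, mul_zero],
    sum_congr rfl hterm, ← mul_sum]
  rcases lt_or_ge m c with hmc | hcm
  · rw [qbinomF_eq_zero_of_lt hmc, zero_mul, zero_mul]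
  obtain ⟨a, rfl⟩ := Nat.exists_eq_add_of_le hcm
  simp only [Nat.cast_add, add_sub_cancel_left, Nat.add_sub_cancel_left]
  rw [← qbinomF_add_eq_sum, show c + a + (c + b) + 1 - c = a + (c + b + 1) by omega,
    ← qbinomF_symm (by omega : c + a + 1 ≤ a + (c + b + 1)),
    show a + (c + b + 1) - (c + a + 1) = b by omega]

lemma sum_qWeight_mul_qbinomF_add (m n k : ℕ) :
    ∑ j ∈ range (k + 1), qWeight m k j * qbinomF (m + n + j + 1) (m + k + 1) =
      qbinomF (m + n) k * qbinomF (m + n + 1) n := by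
  calc _ = ∑ r ∈ range (m + k + 1 + 1),
          q ^ (((↑(m + n + 1) : ℤ) - r) * ((↑(m + k + 1) : ℤ) - r)) *
            qbinomF (m + n + 1) r *
              ∑ j ∈ range (k + 1), qWeight m k j * qbinomF j (m + k + 1 - r) := by
        simp_rw [show ∀ j, m + n + j + 1 = m + n + 1 + j by omega, qbinomF_add_eq_sum (m + n + 1),
          mul_sum]
        rw [sum_comm]
        exact sum_congr rfl fun r _ => sum_congr rfl fun j _ => by ring
    _ = ∑ r ∈ range (m + 1 + (k + 1)),
          q ^ (((↑(m + n + 1) : ℤ) - r) * ((↑(m + k + 1) : ℤ) - r)) *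
            qbinomF (m + n + 1) r * (qbinomF m (m + k + 1 - r) * qbinomF r (m + 1)) := by
        rw [show m + 1 + (k + 1) = m + k + 1 + 1 by omega]
        refine sum_congr rfl fun r hr => ?_
        rw [sum_qWeight_mul_qbinomF, Nat.sub_sub_self (by simp at hr; omega)]
    _ = qbinomF (m + n + 1) (m + 1) *
          ∑ v ∈ range (k + 1),
            q ^ (((n : ℤ) - v) * ((k : ℤ) - v)) * qbinomF n v * qbinomF m (k - v) := by
        rw [sum_range_add_eq_of_forall_lt fun r hr => by
            rw [qbinomF_eq_zero_of_lt hr, mul_zero, mul_zero],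
          mul_sum]
        refine sum_congr rfl fun v _ => ?_
        have htri := qbinomF_mul_qbinomF (n := m + n + 1) (Nat.le_add_right (m + 1) v)
        rw [Nat.add_sub_cancel_left, show m + n + 1 - (m + 1) = n by omega] at htri
        have hexp :
            ((↑(m + n + 1) : ℤ) - ↑(m + 1 + v)) * ((↑(m + k + 1) : ℤ) - ↑(m + 1 + v)) =
              ((n : ℤ) - v) * ((k : ℤ) - v) := by
          push_cast; ring
        rw [hexp, show m + k + 1 - (m + 1 + v) = k - v by omega]
        linear_combination q ^ (((n : ℤ) - v) * ((k : ℤ) - v)) * qbinomF m (k - v) * htri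
    _ = qbinomF (m + n) k * qbinomF (m + n + 1) n := by
        rw [← qbinomF_add_eq_sum, show m + n + 1 = m + 1 + n by omega, qbinomF_symm_add,
          add_comm n m, mul_comm]

lemma sum_Icc_summand_eq_qWeight_mul (m n k j : ℕ) (hj : j < k) :
    ∑ i ∈ Icc 1 n,
      q ^ ((i : ℤ) * ((↑(j + 1) : ℤ) + m + 1) -
          2 * ↑(j + 1) * ((k : ℤ) - ↑(j + 1) + 1)) *
        qbinomF m (j + 1 - 1) * qbinomF (k + 1) (j + 1) * qbinomF (i - 1) (k - (j + 1)) *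
        qbinomF (m + n + (j + 1) - i) (n - i) =
      qWeight m k j * qbinomF (m + n + j + 1) (m + k + 1) := by
  obtain ⟨d, rfl⟩ := Nat.exists_eq_add_of_lt hj
  have hq : q ≠ 0 := RatFunc.X_ne_zero
  have hpow : ∀ i : ℕ,
      q ^ ((i : ℤ) * ((↑(j + 1) : ℤ) + m + 1) -
          2 * ↑(j + 1) * ((↑(j + d + 1) : ℤ) - ↑(j + 1) + 1)) =
        q ^ (-(2 * ((j : ℤ) + 1) * (d + 1))) * q ^ (i * (m + j + 1 + 1)) := by
    intro i
    rw [← zpow_natCast, ← zpow_add₀ hq]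
    push_cast; ring_nf
  have hlast : q ^ (-(2 * ((j : ℤ) + 1) * (d + 1))) * q ^ ((d + 1) * (m + j + 1 + 1)) =
      q ^ (((↑(j + d + 1) : ℤ) - j) * ((m : ℤ) - j)) := by
    rw [← zpow_natCast, ← zpow_add₀ hq]
    push_cast; ring_nf
  calc _ = q ^ (-(2 * ((j : ℤ) + 1) * (d + 1))) * qbinomF m j *
          qbinomF (j + d + 1 + 1) (j + 1) *
            ∑ i ∈ Icc 1 n, q ^ (i * (m + j + 1 + 1)) * qbinomF (i - 1) d *
              qbinomF (m + j + 1 + n - i) (n - i) := by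
        rw [mul_sum]
        refine sum_congr rfl fun i _ => ?_
        rw [hpow, Nat.add_sub_cancel, show j + d + 1 - (j + 1) = d by omega,
          show m + n + (j + 1) = m + j + 1 + n by omega]
        ring
    _ = _ := by
        rw [sum_Icc_pow_mul_qbinomF_mul_qbinomF, qWeight, ← hlast,
          show m + j + 1 + n = m + n + j + 1 by omega,
          show m + j + 1 + d + 1 = m + (j + d + 1) + 1 by omega]
        ring

end

theorem qbinom_identity (m n k : ℕ) :
    qbinomF (m + n) k * qbinomF (m + n + 1) n - qbinomF m k * qbinomF (k + m + n + 1) n =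
      ∑ i ∈ Icc 1 n, ∑ j ∈ Icc 1 k,
        (RatFunc.X : RatFunc ℚ) ^ ((i : ℤ) * ((j : ℤ) + m + 1) - 2 * j * ((k : ℤ) - j + 1)) *
          qbinomF m (j - 1) * qbinomF (k + 1) j * qbinomF (i - 1) (k - j) *
          qbinomF (m + n + j - i) (n - i) := by
  have hlast : qWeight m k k * qbinomF (m + n + k + 1) (m + k + 1) =
      qbinomF m k * qbinomF (k + m + n + 1) n := by
    rw [qWeight, sub_self, zero_mul, zpow_zero, qbinomF_self,
      show m + n + k + 1 = m + k + 1 + n by omega, qbinomF_symm_add,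
      show m + k + 1 + n = k + m + n + 1 by omega, one_mul, mul_one]
  rw [sum_comm, sum_Icc_one_eq_sum_range,
    sum_congr rfl fun j hj => sum_Icc_summand_eq_qWeight_mul m n k j (mem_range.1 hj),
    ← sum_qWeight_mul_qbinomF_add m n k, sum_range_succ, hlast, add_sub_cancel_right]
end

section
/- Let R be a commutative ring and α, β, r ∈ R. For all integers m, n ≥ 0 and every integer k: S(m+n,k;α,β,r) = Σ_{i=0}^{n} Σ_{j=0}^{m} C(n,i) · S(m,j;α,β,r) · S(i,k-j;α,β,r) · ∏_{ℓ=0}^{n-i-1} ((m+ℓ)·α + j·β), where C(n,i) is the binomial coefficient and integer multiples (m+ℓ)·α, j·β are taken in R. -/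
open Finset

/-- The generalized Stirling numbers of Hsu and Shiue, with values in a commutative
ring `R`: `HS α β r 0 0 = 1`, `HS α β r n k = 0` for `k < 0` or `k > n`, and
`HS α β r n k = HS α β r (n-1) (k-1) + (α(n-1) + βk + r) * HS α β r (n-1) k` otherwise. -/
def HS {R : Type*} [CommRing R] (α β r : R) : ℕ → ℤ → R
  | 0, k => if k = 0 then 1 else 0
  | n + 1, k =>
      if k < 0 ∨ ((n : ℤ) + 1) < k then 0
      else HS α β r n (k - 1) + (α * (n : R) + β * (k : R) + r) * HS α β r n k

/-!
Induct on `n`. With `G(k, i, t) = ∑_j S(m,j) S(i,k-j) ∏_{ℓ<t} ((m+ℓ)α + jβ)` the claim reads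
`S(m+n, k) = ∑_i C(n,i) G(k, i, n-i)`. In the recurrence for `S(m+n+1, k)` split the coefficient
`α(m+n) + βk + r` as `(αi + β(k-j) + r) + ((m+n-i)α + jβ)`: the first part advances `S(i, k-j)` to
`S(i+1, k-j)`, the second adds one factor to the product. Pascal's rule recombines the two sums.
-/

section

variable {R : Type*} [CommRing R] (α β r : R)

theorem HS_eq_zero {n : ℕ} {k : ℤ} (h : k < 0 ∨ (n : ℤ) < k) : HS α β r n k = 0 := by
  cases n with
  | zero => simp [HS, show k ≠ 0 by omega]
  | succ n => simp [HS, show k < 0 ∨ (n : ℤ) + 1 < k by push_cast at h; omega]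

theorem HS_succ (n : ℕ) (k : ℤ) :
    HS α β r (n + 1) k = HS α β r n (k - 1) + (α * n + β * k + r) * HS α β r n k := by
  by_cases h : k < 0 ∨ (n : ℤ) + 1 < k
  · rw [HS_eq_zero α β r (by omega : k - 1 < 0 ∨ (n : ℤ) < k - 1),
      HS_eq_zero α β r (by omega : k < 0 ∨ (n : ℤ) < k)]
    simp [HS, h]
  · simp [HS, h]

def HSConv (m : ℕ) (k : ℤ) (i t : ℕ) : R :=
  ∑ j ∈ range (m + 1),
    HS α β r m j * HS α β r i (k - j) * ∏ ℓ ∈ range t, (((m + ℓ : ℕ) : R) * α + (j : R) * β)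

theorem HSConv_zero_zero (m : ℕ) (k : ℤ) : HSConv α β r m k 0 0 = HS α β r m k := by
  simp only [HSConv, HS, prod_range_zero, mul_one, mul_ite, mul_zero, sub_eq_zero]
  by_cases hk : 0 ≤ k ∧ k ≤ m
  · rw [sum_eq_single_of_mem k.toNat (by simp; omega) (fun j _ hj => if_neg (by omega))]
    simp [Int.toNat_of_nonneg hk.1]
  · rw [HS_eq_zero α β r (by omega)]
    exact sum_eq_zero fun j hj => if_neg (by simp at hj; omega)

theorem HSConv_recurrence (m : ℕ) (k : ℤ) (i t : ℕ) :
    HSConv α β r m (k - 1) i t + (α * ((m + i + t : ℕ) : R) + β * k + r) * HSConv α β r m k i t =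
      HSConv α β r m k (i + 1) t + HSConv α β r m k i (t + 1) := by
  simp only [HSConv, mul_sum, ← sum_add_distrib, prod_range_succ, HS_succ]
  refine sum_congr rfl fun j _ => ?_
  rw [sub_right_comm]
  push_cast
  ring

theorem HS_add_eq_sum_choose_mul_HSConv (m n : ℕ) (k : ℤ) :
    HS α β r (m + n) k = ∑ i ∈ range (n + 1), (n.choose i : R) * HSConv α β r m k i (n - i) := by
  induction n generalizing k with
  | zero => simp [HSConv_zero_zero]
  | succ n ih =>
    have step : ∀ i ∈ range (n + 1),
        (n.choose i : R) * HSConv α β r m (k - 1) i (n - i) +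
            (α * ((m + n : ℕ) : R) + β * k + r) * ((n.choose i : R) * HSConv α β r m k i (n - i)) =
          (n.choose i : R) * HSConv α β r m k i (n + 1 - i) +
            (n.choose i : R) * HSConv α β r m k (i + 1) (n - i) := by
      intro i hi
      have hmn : m + n = m + i + (n - i) := by simp at hi; omega
      rw [hmn, mul_left_comm, ← mul_add, HSConv_recurrence, Nat.sub_add_comm (by simpa using hi)]
      ring
    rw [← add_assoc, HS_succ, ih, ih, mul_sum, ← sum_add_distrib, sum_congr rfl step,
      sum_add_distrib, sum_choose_succ_mul (HSConv α β r m k) n]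

end

theorem HS_add {R : Type*} [CommRing R] (α β r : R) (m n : ℕ) (k : ℤ) :
    HS α β r (m + n) k =
      ∑ i ∈ range (n + 1), ∑ j ∈ range (m + 1),
        (n.choose i : R) * HS α β r m (j : ℤ) * HS α β r i (k - j) *
          ∏ ℓ ∈ range (n - i), (((m + ℓ : ℕ) : R) * α + (j : R) * β) := by
  rw [HS_add_eq_sum_choose_mul_HSConv]
  simp only [HSConv, mul_sum, mul_assoc]
end
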